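/- Each Baxter equivalence class of permutations of size n is an interval of the right weak (permutohedron) order on S_n. -/

import Mathlib

open scoped Classical

/-- Baxter adjacency relations on words over the alphabet of natural numbers. -/
def BaxterAdj (w w' : List ℕ) : Prop :=
  (∃ (a b c d : ℕ) (u v : List ℕ), a ≤ b ∧ b < c ∧ c ≤ d ∧
      w = c :: (u ++ a :: d :: (v ++ [b])) ∧ w' = c :: (u ++ d :: a :: (v ++ [b]))) ∨
  (∃ (a b c d : ℕ) (u v : List ℕ), a < b ∧ b ≤ c ∧ c < d ∧
      w = b :: (u ++ d :: a :: (v ++ [c])) ∧ w' = b :: (u ++ a :: d :: (v ++ [c])))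

/-- One rewriting step: an adjacency applied inside a word (congruence context). -/
def BaxterStep (w w' : List ℕ) : Prop :=
  ∃ (p s u v : List ℕ), BaxterAdj u v ∧ w = p ++ u ++ s ∧ w' = p ++ v ++ s

/-- The Baxter congruence: the equivalence generated by the Baxter steps. -/
def BaxterEquiv : List ℕ → List ℕ → Prop := Relation.EqvGen BaxterStep

/-- Sylvester adjacency: a c u b ≡ c a u b when a ≤ b < c. -/
def SylvAdj (w w' : List ℕ) : Prop :=
  ∃ (a b c : ℕ) (u : List ℕ), a ≤ b ∧ b < c ∧
    w = a :: c :: (u ++ [b]) ∧ w' = c :: a :: (u ++ [b])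

def SylvStep (w w' : List ℕ) : Prop :=
  ∃ (p s u v : List ℕ), SylvAdj u v ∧ w = p ++ u ++ s ∧ w' = p ++ v ++ s

def SylvEquiv : List ℕ → List ℕ → Prop := Relation.EqvGen SylvStep

/-- #-sylvester adjacency: b u a c ≡ b u c a when a < b ≤ c. -/
def SylvHAdj (w w' : List ℕ) : Prop :=
  ∃ (a b c : ℕ) (u : List ℕ), a < b ∧ b ≤ c ∧
    w = b :: (u ++ [a, c]) ∧ w' = b :: (u ++ [c, a])

def SylvHStep (w w' : List ℕ) : Prop :=
  ∃ (p s u v : List ℕ), SylvHAdj u v ∧ w = p ++ u ++ s ∧ w' = p ++ v ++ s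

def SylvHEquiv : List ℕ → List ℕ → Prop := Relation.EqvGen SylvHStep

/-- The standardized word of `u`: position `i` receives the rank of the letter `u i`
(ties broken from left to right), ranks starting at `1`. -/
def std (u : List ℕ) : List ℕ :=
  (List.range u.length).map fun i =>
    ((List.range u.length).filter fun j =>
      decide (u.getD j 0 < u.getD i 0 ∨ (u.getD j 0 = u.getD i 0 ∧ j < i))).length + 1

/-- The maximal letter of a word. -/
def wordMax (u : List ℕ) : ℕ := u.foldr max 0

/-- The Schützenberger transformation: reverse and complement each letter w.r.t. max + 1. -/
def schutz (u : List ℕ) : List ℕ := u.reverse.map fun x => wordMax u + 1 - x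

/-- Labeled binary trees. -/
inductive BT where
  | leaf : BT
  | node : BT → ℕ → BT → BT
deriving DecidableEq

/-- Leaf insertion into a left binary search tree. -/
def leafInsL : BT → ℕ → BT
  | .leaf, a => .node .leaf a .leaf
  | .node l b r, a => if a < b then .node (leafInsL l a) b r else .node l b (leafInsL r a)

/-- Leaf insertion into a right binary search tree. -/
def leafInsR : BT → ℕ → BT
  | .leaf, a => .node .leaf a .leaf
  | .node l b r, a => if a ≤ b then .node (leafInsR l a) b r else .node l b (leafInsR r a)

/-- The lower restricted tree `T_{≤ a}` of a right binary search tree. -/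
def splitLE : BT → ℕ → BT
  | .leaf, _ => .leaf
  | .node l b r, a => if b ≤ a then .node l b (splitLE r a) else splitLE l a

/-- The higher restricted tree `T_{> a}` of a right binary search tree. -/
def splitGT : BT → ℕ → BT
  | .leaf, _ => .leaf
  | .node l b r, a => if b ≤ a then splitGT r a else .node (splitGT l a) b r

/-- Root insertion into a right binary search tree. -/
def rootIns (t : BT) (a : ℕ) : BT := .node (splitLE t a) a (splitGT t a)

/-- The left tree of the P-symbol: leaf insertions from left to right. -/
def insL (u : List ℕ) : BT := u.foldl leafInsL .leaf

/-- The right tree of the P-symbol: root insertions from left to right. -/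
def insR (u : List ℕ) : BT := u.foldl rootIns .leaf

/-- The P-symbol of a word. -/
def Psymb (u : List ℕ) : BT × BT := (insL u, insR u)

/-- Unlabeled binary trees. -/
inductive UBT where
  | leaf : UBT
  | node : UBT → UBT → UBT
deriving DecidableEq

/-- The shape of a labeled binary tree. -/
def shape : BT → UBT
  | .leaf => .leaf
  | .node l _ r => .node (shape l) (shape r)

/-- The shape of the P-symbol of a word. -/
def Pshape (u : List ℕ) : UBT × UBT := (shape (insL u), shape (insR u))

/-- Number of internal nodes. -/
def sizeU : UBT → ℕ
  | .leaf => 0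
  | .node l r => sizeU l + sizeU r + 1

/-- Orientations of the leaves, from left to right: `true` means right-oriented
(the leaf is the right child of its parent); the parameter is the orientation
assigned if the tree is reduced to a leaf. -/
def loU : UBT → Bool → List Bool
  | .leaf, b => [b]
  | .node l r, _ => loU l false ++ loU r true

/-- Leaf orientations of a labeled binary tree. -/
def loB : BT → Bool → List Bool
  | .leaf, b => [b]
  | .node l _ r, _ => loB l false ++ loB r true

/-- The canopy: orientations of the leaves except the first and the last one. -/
def canU (t : UBT) : List Bool := ((loU t false).drop 1).dropLast

/-- A pair of twin binary trees: same number of nodes and complementary canopies. -/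
def IsTwin (J : UBT × UBT) : Prop :=
  sizeU J.1 = sizeU J.2 ∧ (canU J.1).length = (canU J.2).length ∧
    ∀ i < (canU J.1).length, (canU J.1).getD i false ≠ (canU J.2).getD i false

/-- `σ` is (the word of) a permutation of `{1, …, n}`. -/
def IsPerm (n : ℕ) (σ : List ℕ) : Prop := σ.Perm (List.range' 1 n)

/-- Covering-type step of the right permutohedron (weak) order: exchange of two
adjacent letters `a < b`. -/
def PermutoStep (σ ν : List ℕ) : Prop :=
  ∃ (p s : List ℕ) (a b : ℕ), a < b ∧ σ = p ++ a :: b :: s ∧ ν = p ++ b :: a :: s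

/-- The right permutohedron (weak) order. -/
def PermutoLe : List ℕ → List ℕ → Prop := Relation.ReflTransGen PermutoStep

/-- Baxter permutations: avoiding the generalized patterns 2-41-3 and 3-14-2. -/
def IsBaxterPerm (σ : List ℕ) : Prop :=
  ∀ i j k, i < j → j + 1 < k → k < σ.length →
    ¬(σ.getD (j+1) 0 < σ.getD i 0 ∧ σ.getD i 0 < σ.getD k 0 ∧ σ.getD k 0 < σ.getD j 0) ∧
    ¬(σ.getD j 0 < σ.getD k 0 ∧ σ.getD k 0 < σ.getD i 0 ∧ σ.getD i 0 < σ.getD (j+1) 0)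

/-!
On words with distinct letters, each Baxter rewriting step is, in one of its two directions, a
descending move: an adjacent descent `y x` is sorted into `x y` while some letter strictly between
`x` and `y` stands to its left and another one to its right. A descending move removes exactly one
inversion, and two descending moves out of the same word can always be joined again (overlapping
ones by the braid relation), so by Newman's lemma every class has a unique normal form `m`, reached
from each of its members. Reading words backwards exchanges descending and ascending moves and
gives a top element `M` in the same way. Descending moves are covering relations of the weak order,
so the class lies in the interval `[m, M]`.

Conversely, on a path from `m` to `M` inside the class, a pair `(a, b)` inverted in `M` but not in
`m` is created by some move, and the two side letters of that move lie between `a` and `b`, to the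
left and to the right of both. Iterating this shows that for `τ` in `[m, M]`, the adjacent descent
created by the last step of a weak-order chain from `m` to `τ` can be undone by a descending move,
so `τ` lies in the class by induction along the chain.
-/

namespace Relation

variable {α : Type*} {r : α → α → Prop}

theorem newman (hwf : WellFounded (flip r))
    (hlc : ∀ a b c, r a b → r a c → Join (ReflTransGen r) b c) {a b c : α}
    (hab : ReflTransGen r a b) (hac : ReflTransGen r a c) : Join (ReflTransGen r) b c := by
  induction a using hwf.induction generalizing b c with
  | _ a ih =>
  rcases hab.cases_head with rfl | ⟨a₁, ha₁, h₁b⟩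
  · exact ⟨c, hac, .refl⟩
  rcases hac.cases_head with rfl | ⟨a₂, ha₂, h₂c⟩
  · exact ⟨b, .refl, .head ha₁ h₁b⟩
  obtain ⟨d, h₁d, h₂d⟩ := hlc a a₁ a₂ ha₁ ha₂
  obtain ⟨e, hbe, hde⟩ := ih a₁ ha₁ h₁b h₁d
  obtain ⟨f, hcf, hef⟩ := ih a₂ ha₂ h₂c (h₂d.trans hde)
  exact ⟨f, hbe.trans hef, hcf⟩

theorem join_of_eqvGen (hwf : WellFounded (flip r))
    (hlc : ∀ a b c, r a b → r a c → Join (ReflTransGen r) b c) {a b : α} (h : EqvGen r a b) :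
    Join (ReflTransGen r) a b :=
  (equivalence_join fun _ _ _ => newman hwf hlc).eqvGen_iff.1
    (EqvGen.mono (fun _ b h => ⟨b, .single h, .refl⟩) _ _ h)

theorem exists_normalForm (hwf : WellFounded (flip r)) (a : α) :
    ∃ b, ReflTransGen r a b ∧ ∀ c, ¬ r b c := by
  induction a using hwf.induction with
  | _ a ih =>
  by_cases h : ∃ b, r a b
  · obtain ⟨b, hab⟩ := h
    obtain ⟨c, hbc, hc⟩ := ih b hab
    exact ⟨c, .head hab hbc, hc⟩
  · exact ⟨a, .refl, fun c hc => h ⟨c, hc⟩⟩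

theorem reflTransGen_of_eqvGen_of_normal (hwf : WellFounded (flip r))
    (hlc : ∀ a b c, r a b → r a c → Join (ReflTransGen r) b c) {a b : α}
    (hb : ∀ c, ¬ r b c) (h : EqvGen r a b) : ReflTransGen r a b := by
  obtain ⟨d, had, hbd⟩ := join_of_eqvGen hwf hlc h
  rcases hbd.cases_head with rfl | ⟨c, hbc, -⟩
  · exact had
  · exact absurd hbc (hb c)

end Relation

namespace List

theorem pair_sublist_append {α : Type*} {l₁ l₂ : List α} {a b : α} :
    [a, b] <+ l₁ ++ l₂ ↔ [a, b] <+ l₁ ∨ [a, b] <+ l₂ ∨ (a ∈ l₁ ∧ b ∈ l₂) := by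
  induction l₁ with
  | nil => simp
  | cons c l₁ ih =>
    simp only [cons_append, sublist_cons_iff, ih, cons.injEq, and_assoc, exists_and_left,
      exists_eq_left', singleton_sublist, mem_append, mem_cons]
    tauto

theorem Nodup.ne_of_pair_sublist {α : Type*} {l : List α} {a b : α} (h : l.Nodup)
    (hab : [a, b] <+ l) : a ≠ b := by
  rintro rfl
  exact nodup_iff_sublist.1 h a hab

variable {α : Type*} [LinearOrder α] {l l₁ l₂ : List α} {a b x y : α}

def inversions (l : List α) : Finset (α × α) :=
  (l.toFinset ×ˢ l.toFinset).filter fun e => e.1 < e.2 ∧ [e.2, e.1] <+ l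

@[simp]
theorem mem_inversions : (a, b) ∈ l.inversions ↔ a < b ∧ [b, a] <+ l := by
  simp only [inversions, Finset.mem_filter, Finset.mem_product, mem_toFinset,
    and_iff_right_iff_imp, and_imp]
  exact fun _ h => ⟨h.subset (by simp), h.subset (by simp)⟩

theorem mem_of_mem_inversions (h : (a, b) ∈ l.inversions) : a ∈ l ∧ b ∈ l :=
  have h := (mem_inversions.1 h).2
  ⟨h.subset (by simp), h.subset (by simp)⟩

theorem mem_inversions_append_of_mem (hab : a < b) (hb : b ∈ l₁) (ha : a ∈ l₂) :
    (a, b) ∈ (l₁ ++ l₂).inversions :=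
  mem_inversions.2 ⟨hab, pair_sublist_append.2 (.inr (.inr ⟨hb, ha⟩))⟩

theorem notMem_inversions_append (h : (l₁ ++ l₂).Nodup) (ha : a ∈ l₁) (hb : b ∈ l₂) :
    (a, b) ∉ (l₁ ++ l₂).inversions := by
  have hd := disjoint_of_nodup_append h
  rw [mem_inversions, pair_sublist_append]
  rintro ⟨-, hba | hba | hba⟩
  · exact hd (hba.subset (by simp)) hb
  · exact hd ha (hba.subset (by simp))
  · exact hd hba.1 hb

theorem inversions_append_swap (hxy : x < y) :
    (l₁ ++ y :: x :: l₂).inversions = insert (x, y) (l₁ ++ x :: y :: l₂).inversions := by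
  ext ⟨a, b⟩
  simp only [mem_inversions, pair_sublist_append, sublist_cons_iff, cons.injEq, and_assoc,
    exists_and_left, exists_eq_left', singleton_sublist, mem_cons, Finset.mem_insert,
    Prod.mk.injEq]
  grind

end List

open List Relation

section BaxterClasses

variable {σ τ τ₀ ν m M w w' w₁ w₂ : List ℕ}

theorem PermutoStep.perm (h : PermutoStep σ ν) : σ.Perm ν := by
  obtain ⟨p, s, a, b, -, rfl, rfl⟩ := h
  exact .append_left p (.swap b a s)

theorem PermutoStep.inversions_subset (h : PermutoStep σ ν) : σ.inversions ⊆ ν.inversions := by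
  obtain ⟨p, s, a, b, hab, rfl, rfl⟩ := h
  rw [inversions_append_swap hab]
  exact Finset.subset_insert _ _

theorem PermutoLe.perm (h : PermutoLe σ ν) : σ.Perm ν := by
  induction h with
  | refl => rfl
  | tail _ h ih => exact ih.trans h.perm

theorem PermutoLe.inversions_subset (h : PermutoLe σ ν) : σ.inversions ⊆ ν.inversions := by
  induction h with
  | refl => rfl
  | tail _ h ih => exact ih.trans h.inversions_subset

/-- Descending Baxter moves on words with distinct letters: an adjacent descent `y x` is sorted
into `x y`, provided letters strictly between `x` and `y` occur both to its left and to its right.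
-/
def BaxterDown (w w' : List ℕ) : Prop :=
  w.Nodup ∧ ∃ (l r : List ℕ) (x y : ℕ), (∃ p ∈ l, x < p ∧ p < y) ∧ (∃ q ∈ r, x < q ∧ q < y) ∧
    w = l ++ y :: x :: r ∧ w' = l ++ x :: y :: r

/-- For `lo = hi = w`: some letter between `a` and `b` stands to the left of both in `w`, and
another one to the right of both. -/
def Witnessed (lo hi : List ℕ) (a b : ℕ) : Prop :=
  (∃ p, a < p ∧ p < b ∧ (a, p) ∈ hi.inversions ∧ (p, b) ∉ lo.inversions) ∧
    (∃ q, a < q ∧ q < b ∧ (a, q) ∉ lo.inversions ∧ (q, b) ∈ hi.inversions)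

theorem Witnessed.mono {lo hi lo' hi' : List ℕ} {a b : ℕ} (h : Witnessed lo hi a b)
    (hlo : lo'.inversions ⊆ lo.inversions) (hhi : hi.inversions ⊆ hi'.inversions) :
    Witnessed lo' hi' a b := by
  obtain ⟨⟨p, hap, hpb, hp, hp'⟩, ⟨q, haq, hqb, hq, hq'⟩⟩ := h
  exact ⟨⟨p, hap, hpb, hhi hp, fun h => hp' (hlo h)⟩, ⟨q, haq, hqb, fun h => hq (hlo h), hhi hq'⟩⟩

namespace BaxterDown

theorem perm (h : BaxterDown w w') : w.Perm w' := by
  obtain ⟨-, l, r, x, y, -, -, rfl, rfl⟩ := h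
  exact .append_left l (.swap x y r)

theorem nodup_right (h : BaxterDown w w') : w'.Nodup := h.perm.nodup_iff.1 h.1

theorem perm_of_eqvGen (h : EqvGen BaxterDown w w') : w.Perm w' :=
  (List.Perm.eqv _).eqvGen_iff.1 (EqvGen.mono (fun _ _ h => h.perm) _ _ h)

theorem permutoStep (h : BaxterDown w w') : PermutoStep w' w := by
  obtain ⟨-, l, r, x, y, ⟨p, -, hxp, hpy⟩, -, rfl, rfl⟩ := h
  exact ⟨l, r, x, y, hxp.trans hpy, rfl, rfl⟩

theorem permutoLe_of_reflTransGen (h : ReflTransGen BaxterDown w w') : PermutoLe w' w :=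
  ReflTransGen.mono (fun _ _ h => permutoStep h) _ _ (reflTransGen_swap.2 h)

theorem inversions_ssubset (h : BaxterDown w w') : w'.inversions ⊂ w.inversions := by
  have hw' := h.nodup_right
  obtain ⟨-, l, r, x, y, ⟨p, -, hxp, hpy⟩, -, rfl, rfl⟩ := h
  rw [inversions_append_swap (hxp.trans hpy)]
  refine Finset.ssubset_insert ?_
  have e : l ++ x :: y :: r = (l ++ [x]) ++ y :: r := by simp
  rw [e] at hw' ⊢
  exact notMem_inversions_append hw' (by simp) (by simp)

theorem wellFounded_flip : WellFounded (flip BaxterDown) :=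
  Subrelation.wf (fun h => inversions_ssubset h) (InvImage.wf inversions wellFounded_lt)

theorem reverse (h : BaxterDown w w') : BaxterDown w'.reverse w.reverse := by
  have hw' := h.nodup_right
  obtain ⟨-, l, r, x, y, ⟨p, hp, hxp, hpy⟩, ⟨q, hq, hxq, hqy⟩, rfl, rfl⟩ := h
  exact ⟨nodup_reverse.2 hw', r.reverse, l.reverse, x, y, ⟨q, by simpa, hxq, hqy⟩,
    ⟨p, by simpa, hxp, hpy⟩, by simp, by simp⟩

theorem eqvGen_reverse (h : EqvGen BaxterDown w w') :
    EqvGen BaxterDown w.reverse w'.reverse := by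
  rw [← EqvGen.reflTransGen_symmGen] at h ⊢
  exact ReflTransGen.lift List.reverse (fun _ _ h => h.symm.imp reverse reverse) _ _ h

theorem witnessed {a b : ℕ} (h : BaxterDown w w') (hab : (a, b) ∈ w.inversions)
    (hab' : (a, b) ∉ w'.inversions) : Witnessed w w a b := by
  obtain ⟨hw, l, r, x, y, ⟨p, hp, hxp, hpy⟩, ⟨q, hq, hxq, hqy⟩, rfl, rfl⟩ := h
  rw [inversions_append_swap (hxp.trans hpy)] at hab
  obtain ⟨rfl, rfl⟩ : a = x ∧ b = y := by simpa [hab'] using hab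
  have e : l ++ b :: a :: r = (l ++ [b, a]) ++ r := by simp
  refine ⟨⟨p, hxp, hpy, mem_inversions_append_of_mem hxp hp (by simp),
    notMem_inversions_append hw hp (by simp)⟩, ⟨q, hxq, hqy, ?_, ?_⟩⟩
  · rw [e] at hw ⊢
    exact notMem_inversions_append hw (by simp) hq
  · rw [e]
    exact mem_inversions_append_of_mem hqy (by simp) hq

theorem join_braid {l r : List ℕ} {x y z : ℕ} (hw : (l ++ y :: x :: z :: r).Nodup)
    (hp : ∃ p ∈ l, x < p ∧ p < y) (hq : ∃ q ∈ r, x < q ∧ q < y)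
    (hp' : ∃ p ∈ l, z < p ∧ p < x) (hq' : ∃ q ∈ r, z < q ∧ q < x) :
    Join (ReflTransGen BaxterDown) (l ++ x :: y :: z :: r) (l ++ y :: z :: x :: r) := by
  obtain ⟨p, hp, hxp, hpy⟩ := hp
  obtain ⟨q, hq, hxq, hqy⟩ := hq
  obtain ⟨p', hp', hzp', hp'x⟩ := hp'
  obtain ⟨q', hq', hzq', hq'x⟩ := hq'
  have hw₁ := (Perm.append_left l (.swap x y (z :: r))).nodup_iff.1 hw
  have hw₂ := (Perm.append_left l (.cons y (.swap z x r))).nodup_iff.1 hw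
  have s₁ : BaxterDown (l ++ x :: y :: z :: r) (l ++ x :: z :: y :: r) :=
    ⟨hw₁, l ++ [x], r, z, y, ⟨x, by simp, by omega, by omega⟩, ⟨q', hq', hzq', by omega⟩,
      by simp, by simp⟩
  have s₂ : BaxterDown (l ++ x :: z :: y :: r) (l ++ z :: x :: y :: r) :=
    ⟨s₁.nodup_right, l, y :: r, z, x, ⟨p', hp', hzp', hp'x⟩, ⟨q', by simp [hq'], hzq', hq'x⟩,
      rfl, rfl⟩
  have s₃ : BaxterDown (l ++ y :: z :: x :: r) (l ++ z :: y :: x :: r) :=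
    ⟨hw₂, l, x :: r, z, y, ⟨p, hp, by omega, hpy⟩, ⟨x, by simp, by omega, by omega⟩, rfl, rfl⟩
  have s₄ : BaxterDown (l ++ z :: y :: x :: r) (l ++ z :: x :: y :: r) :=
    ⟨s₃.nodup_right, l ++ [z], r, x, y, ⟨p, by simp [hp], hxp, hpy⟩, ⟨q, hq, hxq, hqy⟩,
      by simp, by simp⟩
  exact ⟨_, .head s₁ (.single s₂), .head s₃ (.single s₄)⟩

theorem join_reflTransGen (h₁ : BaxterDown w w₁) (h₂ : BaxterDown w w₂) :
    Join (ReflTransGen BaxterDown) w₁ w₂ := by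
  have hw₁ := h₁.nodup_right
  have hw₂ := h₂.nodup_right
  obtain ⟨hw, l, r, x, y, ⟨p, hp, hxp, hpy⟩, ⟨q, hq, hxq, hqy⟩, hw_eq, rfl⟩ := h₁
  obtain ⟨-, l', r', x', y', ⟨p', hp', hxp', hpy'⟩, ⟨q', hq', hxq', hqy'⟩, hw_eq', rfl⟩ := h₂
  wlog hle : l.length ≤ l'.length generalizing l r x y p q l' r' x' y' p' q'
  · obtain ⟨d, h₂d, h₁d⟩ := this l' r' x' y' p' hp' hxp' hpy' q' hq' hxq' hqy' hw_eq' hw₂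
      l r x y p hp hxp hpy q hq hxq hqy hw_eq hw₁ (by omega)
    exact ⟨d, h₁d, h₂d⟩
  obtain ⟨γ, rfl, hγ⟩ : ∃ γ, l' = l ++ γ ∧ y :: x :: r = γ ++ y' :: x' :: r' := by
    rcases append_eq_append_iff.1 (hw_eq.symm.trans hw_eq') with ⟨γ, h, h'⟩ | ⟨γ, h, h'⟩
    · exact ⟨γ, h, h'⟩
    · obtain rfl : γ = [] := by simpa using (congrArg length h).symm.trans_le hle
      simp_all
  rcases γ with _ | ⟨g, _ | ⟨g', γ⟩⟩
  · simp only [nil_append, cons.injEq] at hγ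
    obtain ⟨rfl, rfl, rfl⟩ := hγ
    simp only [append_nil]
    exact ⟨_, .refl, .refl⟩
  · simp only [cons_append, nil_append, cons.injEq] at hγ
    obtain ⟨rfl, rfl, rfl⟩ := hγ
    replace hq : q ∈ r' := (mem_cons.1 hq).resolve_left (by omega)
    replace hp' : p' ∈ l := (mem_append.1 hp').resolve_right (by simp; omega)
    simpa using join_braid (hw_eq ▸ hw) ⟨p, hp, hxp, hpy⟩ ⟨q, hq, hxq, hqy⟩
      ⟨p', hp', hxp', hpy'⟩ ⟨q', hq', hxq', hqy'⟩
  · simp only [cons_append, cons.injEq] at hγ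
    obtain ⟨rfl, rfl, rfl⟩ := hγ
    have s₁ : BaxterDown (l ++ x :: y :: (γ ++ y' :: x' :: r'))
        (l ++ x :: y :: (γ ++ x' :: y' :: r')) :=
      ⟨hw₁, l ++ x :: y :: γ, r', x', y', ⟨p', by simp at hp' ⊢; tauto, hxp', hpy'⟩,
        ⟨q', hq', hxq', hqy'⟩, by simp, by simp⟩
    have s₂ : BaxterDown (l ++ y :: x :: γ ++ x' :: y' :: r')
        (l ++ x :: y :: (γ ++ x' :: y' :: r')) :=
      ⟨hw₂, l, γ ++ x' :: y' :: r', x, y, ⟨p, hp, hxp, hpy⟩,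
        ⟨q, by simp at hq ⊢; tauto, hxq, hqy⟩, by simp, rfl⟩
    exact ⟨_, .single s₁, .single s₂⟩

theorem exists_bottom (σ : List ℕ) :
    ∃ m, EqvGen BaxterDown σ m ∧ ∀ τ, EqvGen BaxterDown σ τ → ReflTransGen BaxterDown τ m := by
  obtain ⟨m, hσm, hm⟩ := exists_normalForm wellFounded_flip σ
  have hσm' := EqvGen.reflTransGen_le_eqvGen _ _ _ hσm
  exact ⟨m, hσm', fun τ hστ => reflTransGen_of_eqvGen_of_normal wellFounded_flip
    (fun _ _ _ => join_reflTransGen) hm ((EqvGen.symm _ _ hστ).trans _ _ _ hσm')⟩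

theorem exists_top (σ : List ℕ) :
    ∃ M, EqvGen BaxterDown σ M ∧ ∀ τ, EqvGen BaxterDown σ τ → ReflTransGen BaxterDown M τ := by
  obtain ⟨M, hσM, hM⟩ := exists_bottom σ.reverse
  refine ⟨M.reverse, by simpa using eqvGen_reverse hσM, fun τ hστ => ?_⟩
  have h := ReflTransGen.lift List.reverse (p := flip BaxterDown) (fun _ _ h => reverse h) _ _
    (hM τ.reverse (eqvGen_reverse hστ))
  simpa using (reflTransGen_swap (r := BaxterDown)).1 h

theorem symmGen_baxterStep (h : BaxterDown w w') : SymmGen BaxterStep w w' := by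
  obtain ⟨hw, l, r, x, y, ⟨p, hp, hxp, hpy⟩, ⟨q, hq, hxq, hqy⟩, rfl, rfl⟩ := h
  have hpq : p ≠ q := fun e => disjoint_of_nodup_append hw hp (by simp [e, hq])
  obtain ⟨l₁, l₂, rfl⟩ := append_of_mem hp
  obtain ⟨r₁, r₂, rfl⟩ := append_of_mem hq
  rcases hpq.lt_or_gt with hpq | hqp
  · exact .inl ⟨l₁, r₂, _, _, .inr ⟨x, p, q, y, l₂, r₁, hxp, hpq.le, hqy, rfl, rfl⟩,
      by simp, by simp⟩
  · exact .inr ⟨l₁, r₂, _, _, .inl ⟨x, q, p, y, l₂, r₁, hxq.le, hqp, hpy.le, rfl, rfl⟩,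
      by simp, by simp⟩

end BaxterDown

theorem BaxterStep.perm (h : BaxterStep w w') : w.Perm w' := by
  obtain ⟨P, S, u, v, hadj, rfl, rfl⟩ := h
  refine .append_right S (.append_left P ?_)
  rcases hadj with ⟨a, b, c, d, u, v, -, -, -, rfl, rfl⟩ | ⟨a, b, c, d, u, v, -, -, -, rfl, rfl⟩
  · exact .cons c (.append_left u (.swap d a _))
  · exact .cons b (.append_left u (.swap a d _))

theorem BaxterStep.symmGen_baxterDown (hw : w.Nodup) (h : BaxterStep w w') :
    SymmGen BaxterDown w w' := by
  have hw' := h.perm.nodup_iff.1 hw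
  obtain ⟨P, S, u, v, hadj, rfl, rfl⟩ := h
  rcases hadj with ⟨a, b, c, d, u, v, hab, hbc, hcd, rfl, rfl⟩ |
    ⟨a, b, c, d, u, v, hab, hbc, hcd, rfl, rfl⟩
  · have hab' : a ≠ b := hw.ne_of_pair_sublist (by simp [pair_sublist_append, sublist_cons_iff])
    have hcd' : c ≠ d := hw.ne_of_pair_sublist (by simp [pair_sublist_append, sublist_cons_iff])
    exact .inr ⟨hw', P ++ c :: u, v ++ b :: S, a, d, ⟨c, by simp, by omega, by omega⟩,
      ⟨b, by simp, by omega, by omega⟩, by simp, by simp⟩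
  · exact .inl ⟨hw, P ++ b :: u, v ++ c :: S, a, d, ⟨b, by simp, hab, by omega⟩,
      ⟨c, by simp, by omega, hcd⟩, by simp, by simp⟩

theorem baxterEquiv_iff_eqvGen (hw : w.Nodup) : BaxterEquiv w w' ↔ EqvGen BaxterDown w w' := by
  rw [BaxterEquiv, ← EqvGen.reflTransGen_symmGen, ← EqvGen.reflTransGen_symmGen]
  refine ⟨fun h => ?_, ReflTransGen.mono (fun _ _ h => ?_) _ _⟩
  · induction h using ReflTransGen.head_induction_on with
    | refl => exact .refl
    | head hstep _ ih =>
      have hdown : SymmGen BaxterDown _ _ := hstep.elim (·.symmGen_baxterDown hw)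
        fun h => (h.symmGen_baxterDown (h.perm.nodup_iff.2 hw)).symm
      exact .head hdown (ih (hdown.elim (·.nodup_right) (·.1)))
  · exact h.elim (·.symmGen_baxterStep) fun h => h.symmGen_baxterStep.symm

theorem witnessed_of_eqvGen
    (hsand : ∀ τ, EqvGen BaxterDown m τ → m.inversions ⊆ τ.inversions ∧ τ.inversions ⊆ M.inversions)
    (hmM : EqvGen BaxterDown m M) {a b : ℕ} (habM : (a, b) ∈ M.inversions)
    (habm : (a, b) ∉ m.inversions) : Witnessed m M a b := by
  rw [← EqvGen.reflTransGen_symmGen] at hmM hsand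
  suffices ∀ w, ReflTransGen (SymmGen BaxterDown) m w → (a, b) ∈ w.inversions →
      Witnessed m M a b from this M hmM habM
  intro w hw
  induction hw with
  | refl => exact fun h => absurd h habm
  | @tail w₀ w hw₀ hstep ih =>
    intro hab
    by_cases h₀ : (a, b) ∈ w₀.inversions
    · exact ih h₀
    rcases hstep with hd | hd
    · exact absurd (hd.inversions_ssubset.subset hab) h₀
    · obtain ⟨hmw, hwM⟩ := hsand w (hw₀.tail (.inr hd))
      exact (hd.witnessed hab h₀).mono hmw hwM

section Witnesses

variable (hE : ∀ a b, (a, b) ∈ M.inversions → (a, b) ∉ m.inversions → Witnessed m M a b)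
  (hτM : τ.inversions ⊆ M.inversions) (hMτ : M ⊆ τ)
include hE hτM hMτ

theorem exists_left_of_witnessed {a b : ℕ} (hab : (a, b) ∈ τ.inversions)
    (habm : (a, b) ∉ m.inversions) : ∃ v, a < v ∧ v < b ∧ v ∈ τ ∧ (v, b) ∉ τ.inversions := by
  obtain ⟨⟨p, hap, hpb, hapM, hpbm⟩, -⟩ := hE a b (hτM hab) habm
  by_cases hpb' : (p, b) ∈ τ.inversions
  · obtain ⟨v, hpv, hvb, hv⟩ := exists_left_of_witnessed hpb' hpbm
    exact ⟨v, hap.trans hpv, hvb, hv⟩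
  · exact ⟨p, hap, hpb, hMτ (mem_of_mem_inversions hapM).2, hpb'⟩
termination_by b - a

theorem exists_right_of_witnessed {a b : ℕ} (hab : (a, b) ∈ τ.inversions)
    (habm : (a, b) ∉ m.inversions) : ∃ v, a < v ∧ v < b ∧ v ∈ τ ∧ (a, v) ∉ τ.inversions := by
  obtain ⟨-, ⟨q, haq, hqb, haqm, hqbM⟩⟩ := hE a b (hτM hab) habm
  by_cases haq' : (a, q) ∈ τ.inversions
  · obtain ⟨v, hav, hvq, hv⟩ := exists_right_of_witnessed haq' haqm
    exact ⟨v, hav, hvq.trans hqb, hv⟩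
  · exact ⟨q, haq, hqb, hMτ (mem_of_mem_inversions hqbM).1, haq'⟩
termination_by b - a

theorem baxterDown_of_permutoStep (hτ : τ.Nodup) (hmτ₀ : m.inversions ⊆ τ₀.inversions)
    (h : PermutoStep τ₀ τ) : BaxterDown τ τ₀ := by
  have hτ₀ := h.perm.nodup_iff.2 hτ
  obtain ⟨l, r, a, b, hab, rfl, rfl⟩ := h
  have hba : (a, b) ∈ (l ++ b :: a :: r).inversions := by
    rw [inversions_append_swap hab]
    exact Finset.mem_insert_self _ _
  have habm : (a, b) ∉ m.inversions := by
    have e : l ++ a :: b :: r = (l ++ [a]) ++ b :: r := by simp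
    rw [e] at hτ₀ hmτ₀
    exact fun h => notMem_inversions_append hτ₀ (by simp) (by simp) (hmτ₀ h)
  obtain ⟨p, hap, hpb, hpτ, hp⟩ := exists_left_of_witnessed hE hτM hMτ hba habm
  obtain ⟨q, haq, hqb, hqτ, hq⟩ := exists_right_of_witnessed hE hτM hMτ hba habm
  have e : l ++ b :: a :: r = (l ++ [b, a]) ++ r := by simp
  refine ⟨hτ, l, r, a, b, ⟨p, ?_, hap, hpb⟩, ⟨q, ?_, haq, hqb⟩, rfl, rfl⟩
  · rcases mem_append.1 (e ▸ hpτ) with h | h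
    · simpa [hpb.ne, hap.ne'] using h
    · exact absurd (e ▸ mem_inversions_append_of_mem hpb (by simp) h) hp
  · rcases mem_append.1 hqτ with h | h
    · exact absurd (mem_inversions_append_of_mem haq h (by simp)) hq
    · simpa [hqb.ne, haq.ne'] using h

end Witnesses

theorem eqvGen_of_permutoLe
    (hE : ∀ a b, (a, b) ∈ M.inversions → (a, b) ∉ m.inversions → Witnessed m M a b)
    (hM : M.Nodup) (hmτ : PermutoLe m τ) (hτM : PermutoLe τ M) : EqvGen BaxterDown m τ := by
  induction hmτ with
  | refl => exact .refl _
  | @tail τ₀ τ hmτ₀ hstep ih =>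
    have hdown := baxterDown_of_permutoStep hE hτM.inversions_subset
      (fun _ h => hτM.perm.mem_iff.2 h) (hτM.perm.nodup_iff.2 hM) (PermutoLe.inversions_subset hmτ₀)
      hstep
    exact (ih (.head hstep hτM)).trans _ _ _ (.symm _ _ (.rel _ _ hdown))

theorem exists_eqvGen_baxterDown_iff_permutoLe (hσ : σ.Nodup) :
    ∃ m M, EqvGen BaxterDown σ m ∧ EqvGen BaxterDown σ M ∧
      ∀ τ, EqvGen BaxterDown σ τ ↔ PermutoLe m τ ∧ PermutoLe τ M := by
  obtain ⟨m, hσm, hbot⟩ := BaxterDown.exists_bottom σ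
  obtain ⟨M, hσM, htop⟩ := BaxterDown.exists_top σ
  have hclass (τ) (h : EqvGen BaxterDown σ τ) : PermutoLe m τ ∧ PermutoLe τ M :=
    ⟨BaxterDown.permutoLe_of_reflTransGen (hbot τ h),
      BaxterDown.permutoLe_of_reflTransGen (htop τ h)⟩
  have hsand (τ) (h : EqvGen BaxterDown m τ) :
      m.inversions ⊆ τ.inversions ∧ τ.inversions ⊆ M.inversions :=
    (hclass τ (hσm.trans _ _ _ h)).imp PermutoLe.inversions_subset PermutoLe.inversions_subset
  have hE (a b) := witnessed_of_eqvGen (a := a) (b := b) hsand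
    ((EqvGen.symm _ _ hσm).trans _ _ _ hσM)
  refine ⟨m, M, hσm, hσM, fun τ => ⟨hclass τ, fun ⟨hmτ, hτM⟩ => hσm.trans _ _ _ ?_⟩⟩
  exact eqvGen_of_permutoLe hE ((BaxterDown.perm_of_eqvGen hσM).nodup_iff.1 hσ) hmτ hτM

end BaxterClasses

/-- each Baxter equivalence class of permutations of size `n` is
an interval of the right permutohedron order. -/
theorem baxter_class_is_permutohedron_interval (n : ℕ) (σ : List ℕ)
    (hσ : IsPerm n σ) :
    ∃ m M : List ℕ, IsPerm n m ∧ IsPerm n M ∧ BaxterEquiv σ m ∧ BaxterEquiv σ M ∧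
      ∀ τ : List ℕ, IsPerm n τ →
        (BaxterEquiv σ τ ↔ (PermutoLe m τ ∧ PermutoLe τ M)) := by
  have hσn : σ.Nodup := hσ.nodup_iff.2 (nodup_range' ..)
  obtain ⟨m, M, hσm, hσM, hinterval⟩ := exists_eqvGen_baxterDown_iff_permutoLe hσn
  exact ⟨m, M, (BaxterDown.perm_of_eqvGen hσm).symm.trans hσ,
    (BaxterDown.perm_of_eqvGen hσM).symm.trans hσ, (baxterEquiv_iff_eqvGen hσn).2 hσm,
    (baxterEquiv_iff_eqvGen hσn).2 hσM, fun τ _ => (baxterEquiv_iff_eqvGen hσn).trans (hinterval τ)⟩
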